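/- arXiv:1507.01859 — 5 statements merged into one kernel-verified Lean document; each statement's English description precedes it below -/
import Mathlib

section
/- Let W, X be M×M Hermitian matrices with X positive definite and tr(X) = 1. Then for all s ∈ [0,1], tr(X^{1-s} W X^s W) ≥ (tr(X W))², with equality if and only if W is a scalar multiple of the identity. -/
/-!
Write `X = U diag(λ) U†` and `B = U† W U`, which is Hermitian. Then the left side is
`∑ᵢⱼ λᵢ^(1-s) λⱼ^s |Bᵢⱼ|²` and `tr(X W) = ∑ᵢ λᵢ Bᵢᵢ`, with `λᵢ > 0` summing to `1`. The diagonal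
terms alone give `∑ᵢ λᵢ Bᵢᵢ²`, which dominates `(∑ᵢ λᵢ Bᵢᵢ)²` by Jensen's inequality for the
strictly convex square. Equality forces the off-diagonal entries of `B` to vanish and its diagonal
to be constant, i.e. `B`, equivalently `W`, is scalar.
-/

open Matrix
open scoped ComplexOrder

/-- The real power `X ^ s` of a Hermitian matrix `X`, defined through the functional calculus
(spectral decomposition): `X^s = U diag(λᵢ^s) U†`. -/
noncomputable def hermPow {M : ℕ} {X : Matrix (Fin M) (Fin M) ℂ} (hX : X.IsHermitian)
    (s : ℝ) : Matrix (Fin M) (Fin M) ℂ :=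
  (hX.eigenvectorUnitary : Matrix (Fin M) (Fin M) ℂ) *
    Matrix.diagonal (fun i => ((hX.eigenvalues i ^ s : ℝ) : ℂ)) *
      (star (hX.eigenvectorUnitary : Matrix (Fin M) (Fin M) ℂ))

section SumsOfWeights

variable {ι : Type*} [Fintype ι]

theorem sum_diag_le_sum_sum {N : Type*} [AddCommMonoid N] [PartialOrder N]
    [IsOrderedAddMonoid N] {f : ι → ι → N} (hf : ∀ i j, 0 ≤ f i j) :
    ∑ i, f i i ≤ ∑ i, ∑ j, f i j :=
  Finset.sum_le_sum fun i _ => Finset.single_le_sum (fun j _ => hf i j) (Finset.mem_univ i)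

theorem sum_sum_eq_sum_diag_iff {N : Type*} [AddCommMonoid N] [PartialOrder N]
    [IsOrderedCancelAddMonoid N] {f : ι → ι → N} (hf : ∀ i j, 0 ≤ f i j) :
    ∑ i, ∑ j, f i j = ∑ i, f i i ↔ ∀ i j, i ≠ j → f i j = 0 := by
  classical
  have hrow (i : ι) : ∑ j, f i j = f i i + ∑ j ∈ Finset.univ.erase i, f i j :=
    (Finset.add_sum_erase _ _ (Finset.mem_univ i)).symm
  rw [eq_comm, Finset.sum_eq_sum_iff_of_le fun i _ =>
    Finset.single_le_sum (fun j _ => hf i j) (Finset.mem_univ i)]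
  simp only [Finset.mem_univ, true_implies, hrow, left_eq_add,
    Finset.sum_eq_zero_iff_of_nonneg fun j _ => hf _ j]
  exact forall_congr' fun i => forall_congr' fun j => by
    rw [Finset.mem_erase, ne_comm, and_iff_left (Finset.mem_univ j)]

theorem sq_sum_mul_le_sum_mul_sq {w b : ι → ℝ} (hw : ∀ i, 0 ≤ w i) (hsum : ∑ i, w i = 1) :
    (∑ i, w i * b i) ^ 2 ≤ ∑ i, w i * b i ^ 2 :=
  (Even.strictConvexOn_pow even_two two_ne_zero).convexOn.map_sum_le (fun i _ => hw i) hsum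
    (fun i _ => Set.mem_univ (b i))

theorem sq_sum_mul_eq_sum_mul_sq_iff {w b : ι → ℝ} (hw : ∀ i, 0 < w i) (hsum : ∑ i, w i = 1) :
    (∑ i, w i * b i) ^ 2 = ∑ i, w i * b i ^ 2 ↔ ∀ i j, b i = b j := by
  simpa using (Even.strictConvexOn_pow even_two two_ne_zero).map_sum_eq_iff_of_pos
    (fun i _ => hw i) hsum (fun i _ => Set.mem_univ (b i))

end SumsOfWeights

namespace Matrix

variable {n : Type*}

theorem trace_diagonal_mul_diagonal_mul {R : Type*} [CommSemiring R] [Fintype n]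
    [DecidableEq n] (d e : n → R) (A B : Matrix n n R) :
    trace (diagonal d * A * diagonal e * B) = ∑ i, ∑ j, d i * e j * (A i j * B j i) := by
  simp only [trace, diag, mul_apply (N := B), mul_diagonal, diagonal_mul]
  refine Finset.sum_congr rfl fun i _ => Finset.sum_congr rfl fun j _ => ?_
  ring

theorem IsHermitian.apply_mul_apply_swap {B : Matrix n n ℂ} (hB : B.IsHermitian) (i j : n) :
    B i j * B j i = Complex.normSq (B i j) := by
  rw [← hB.apply j i]
  exact Complex.mul_conj _

theorem IsHermitian.normSq_apply_self {B : Matrix n n ℂ} (hB : B.IsHermitian) (i : n) :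
    Complex.normSq (B i i) = (B i i).re ^ 2 := by
  have him : (B i i).im = 0 := by
    simpa using congrArg Complex.im (hB.coe_re_apply_self i).symm
  rw [Complex.normSq_apply, him]
  ring

theorem exists_eq_smul_one_iff {R : Type*} [Semiring R] [DecidableEq n] {B : Matrix n n R} :
    (∃ c : R, B = c • 1) ↔ (∀ i j, i ≠ j → B i j = 0) ∧ ∀ i j, B i i = B j j := by
  constructor
  · rintro ⟨c, rfl⟩
    exact ⟨fun i j hij => by simp [one_apply_ne hij], fun i j => by simp⟩
  · rintro ⟨hoff, hdiag⟩
    cases isEmpty_or_nonempty n with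
    | inl _ => exact ⟨0, Subsingleton.elim _ _⟩
    | inr h =>
      obtain ⟨i₀⟩ := h
      refine ⟨B i₀ i₀, ext fun i j => ?_⟩
      by_cases hij : i = j
      · subst hij; simp [hdiag i i₀]
      · simp [hoff i j hij, one_apply_ne hij]

theorem trace_conj_mul_conj_mul {R : Type*} [CommSemiring R] [Fintype n]
    (U D E V W : Matrix n n R) :
    trace (U * D * V * W * (U * E * V) * W) = trace (D * (V * W * U) * E * (V * W * U)) :=
  calc trace (U * D * V * W * (U * E * V) * W)
      = trace (U * (D * (V * W * U) * E * (V * W))) := by simp only [Matrix.mul_assoc]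
    _ = trace (D * (V * W * U) * E * (V * W) * U) := trace_mul_comm _ _
    _ = _ := by simp only [Matrix.mul_assoc]

theorem trace_conj_mul {R : Type*} [CommSemiring R] [Fintype n] (U D V W : Matrix n n R) :
    trace (U * D * V * W) = trace (D * (V * W * U)) := by
  rw [Matrix.mul_assoc, Matrix.mul_assoc, trace_mul_comm, Matrix.mul_assoc, Matrix.mul_assoc]

end Matrix

section WeightedNormSq

open Matrix

variable {n : Type*} [Fintype n] {lam : n → ℝ} {a : n → n → ℝ} {B : Matrix n n ℂ}

theorem sum_mul_re_sq_diag_eq_sum_mul_normSq_diag (hdiag : ∀ i, a i i = lam i)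
    (hB : B.IsHermitian) :
    ∑ i, lam i * (B i i).re ^ 2 = ∑ i, a i i * Complex.normSq (B i i) := by
  simp only [hdiag, hB.normSq_apply_self]

theorem sq_sum_mul_re_diag_le_sum_sum_mul_normSq (hsum : ∑ i, lam i = 1)
    (ha : ∀ i j, 0 ≤ a i j) (hdiag : ∀ i, a i i = lam i) (hB : B.IsHermitian) :
    (∑ i, lam i * (B i i).re) ^ 2 ≤ ∑ i, ∑ j, a i j * Complex.normSq (B i j) :=
  calc (∑ i, lam i * (B i i).re) ^ 2
      ≤ ∑ i, lam i * (B i i).re ^ 2 :=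
        sq_sum_mul_le_sum_mul_sq (fun i => hdiag i ▸ ha i i) hsum
    _ = ∑ i, a i i * Complex.normSq (B i i) := sum_mul_re_sq_diag_eq_sum_mul_normSq_diag hdiag hB
    _ ≤ _ := sum_diag_le_sum_sum fun i j => mul_nonneg (ha i j) (Complex.normSq_nonneg _)

theorem sq_sum_mul_re_diag_eq_sum_sum_mul_normSq_iff [DecidableEq n] (hsum : ∑ i, lam i = 1)
    (ha : ∀ i j, 0 < a i j) (hdiag : ∀ i, a i i = lam i) (hB : B.IsHermitian) :
    (∑ i, lam i * (B i i).re) ^ 2 = ∑ i, ∑ j, a i j * Complex.normSq (B i j) ↔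
      ∃ c : ℂ, B = c • 1 := by
  have hlam i : 0 < lam i := hdiag i ▸ ha i i
  have hterm i j : 0 ≤ a i j * Complex.normSq (B i j) :=
    mul_nonneg (ha i j).le (Complex.normSq_nonneg _)
  have hjensen := sq_sum_mul_le_sum_mul_sq (b := fun i => (B i i).re) (fun i => (hlam i).le) hsum
  have hoff := sum_diag_le_sum_sum hterm
  rw [← sum_mul_re_sq_diag_eq_sum_mul_normSq_diag hdiag hB] at hoff
  have hsplit : (∑ i, lam i * (B i i).re) ^ 2 = ∑ i, ∑ j, a i j * Complex.normSq (B i j) ↔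
      (∑ i, lam i * (B i i).re) ^ 2 = ∑ i, lam i * (B i i).re ^ 2 ∧
        ∑ i, ∑ j, a i j * Complex.normSq (B i j) = ∑ i, lam i * (B i i).re ^ 2 :=
    ⟨fun h => ⟨by linarith, by linarith⟩, fun h => h.1.trans h.2.symm⟩
  rw [hsplit, sq_sum_mul_eq_sum_mul_sq_iff hlam hsum,
    sum_mul_re_sq_diag_eq_sum_mul_normSq_diag hdiag hB, sum_sum_eq_sum_diag_iff hterm,
    exists_eq_smul_one_iff, and_comm]
  refine and_congr (forall₂_congr fun i j => ?_) (forall₂_congr fun i j => ?_)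
  · simp only [mul_eq_zero, (ha i j).ne', false_or, Complex.normSq_eq_zero]
  · have hi : ((B i i).re : ℂ) = B i i := hB.coe_re_apply_self i
    have hj : ((B j j).re : ℂ) = B j j := hB.coe_re_apply_self j
    exact ⟨fun h => by rw [← hi, ← hj, h], congrArg Complex.re⟩

end WeightedNormSq

section Eigenbasis

variable {M : ℕ} {X : Matrix (Fin M) (Fin M) ℂ} (hX : X.IsHermitian) (W : Matrix (Fin M) (Fin M) ℂ)

noncomputable def inEigenbasis : Matrix (Fin M) (Fin M) ℂ :=
  star (hX.eigenvectorUnitary : Matrix (Fin M) (Fin M) ℂ) * W *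
    (hX.eigenvectorUnitary : Matrix (Fin M) (Fin M) ℂ)

variable {W}

theorem inEigenbasis_isHermitian (hW : W.IsHermitian) : (inEigenbasis hX W).IsHermitian := by
  rw [inEigenbasis, star_eq_conjTranspose]
  exact isHermitian_conjTranspose_mul_mul _ hW

theorem eigenvectorUnitary_mul_inEigenbasis_mul_star :
    (hX.eigenvectorUnitary : Matrix (Fin M) (Fin M) ℂ) * inEigenbasis hX W *
      star (hX.eigenvectorUnitary : Matrix (Fin M) (Fin M) ℂ) = W := by
  set U : Matrix (Fin M) (Fin M) ℂ := (hX.eigenvectorUnitary : Matrix (Fin M) (Fin M) ℂ)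
  have hUU : U * star U = 1 := mem_unitaryGroup_iff.mp hX.eigenvectorUnitary.2
  calc U * (star U * W * U) * star U = U * star U * W * (U * star U) := by
        simp only [Matrix.mul_assoc]
    _ = W := by rw [hUU, Matrix.one_mul, Matrix.mul_one]

theorem inEigenbasis_eq_smul_one_iff (c : ℂ) : inEigenbasis hX W = c • 1 ↔ W = c • 1 := by
  have hUU := mem_unitaryGroup_iff.mp hX.eigenvectorUnitary.2
  have hUU' := mem_unitaryGroup_iff'.mp hX.eigenvectorUnitary.2
  constructor
  · intro h
    rw [← eigenvectorUnitary_mul_inEigenbasis_mul_star hX (W := W), h, Matrix.mul_smul,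
      Matrix.smul_mul, Matrix.mul_one, hUU]
  · rintro rfl
    rw [inEigenbasis, Matrix.mul_smul, Matrix.mul_one, Matrix.smul_mul, hUU']

theorem re_trace_hermPow_mul_hermPow_mul (hW : W.IsHermitian) (t u : ℝ) :
    (trace (hermPow hX t * W * hermPow hX u * W)).re =
      ∑ i, ∑ j, hX.eigenvalues i ^ t * hX.eigenvalues j ^ u *
        Complex.normSq (inEigenbasis hX W i j) := by
  rw [hermPow, hermPow, trace_conj_mul_conj_mul, ← inEigenbasis, trace_diagonal_mul_diagonal_mul]
  simp only [(inEigenbasis_isHermitian hX hW).apply_mul_apply_swap, ← Complex.ofReal_mul,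
    ← Complex.ofReal_sum, Complex.ofReal_re]

theorem re_trace_mul_eq_sum_eigenvalues_mul_re_diag :
    (trace (X * W)).re = ∑ i, hX.eigenvalues i * (inEigenbasis hX W i i).re := by
  conv_lhs => rw [hX.spectral_theorem, Unitary.conjStarAlgAut_apply]
  rw [trace_conj_mul, ← inEigenbasis]
  simp [trace, diagonal_mul]

end Eigenbasis

theorem trace_jensen_ineq_general {M : ℕ} (X W : Matrix (Fin M) (Fin M) ℂ)
    (hX : X.IsHermitian) (hW : W.IsHermitian) (hXpd : X.PosDef) (htr : X.trace = 1)
    (s : ℝ) :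
    (Matrix.trace (hermPow hX (1 - s) * W * hermPow hX s * W)).re ≥
        ((Matrix.trace (X * W)).re) ^ 2 ∧
      ((Matrix.trace (hermPow hX (1 - s) * W * hermPow hX s * W)).re =
          ((Matrix.trace (X * W)).re) ^ 2 ↔ ∃ c : ℂ, W = c • (1 : Matrix (Fin M) (Fin M) ℂ)) := by
  have hsum : ∑ i, hX.eigenvalues i = 1 := by
    simpa using congrArg Complex.re (hX.trace_eq_sum_eigenvalues.symm.trans htr)
  set lam := hX.eigenvalues
  have hlam : ∀ i, 0 < lam i := hXpd.eigenvalues_pos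
  have hweight i j : 0 < lam i ^ (1 - s) * lam j ^ s :=
    mul_pos (Real.rpow_pos_of_pos (hlam i) _) (Real.rpow_pos_of_pos (hlam j) _)
  have hdiag i : lam i ^ (1 - s) * lam i ^ s = lam i := by
    rw [← Real.rpow_add (hlam i), sub_add_cancel, Real.rpow_one]
  have hB := inEigenbasis_isHermitian hX hW
  rw [re_trace_hermPow_mul_hermPow_mul hX hW, re_trace_mul_eq_sum_eigenvalues_mul_re_diag hX,
    eq_comm, sq_sum_mul_re_diag_eq_sum_sum_mul_normSq_iff hsum hweight hdiag hB]
  refine ⟨sq_sum_mul_re_diag_le_sum_sum_mul_normSq hsum (fun i j => (hweight i j).le) hdiag hB,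
    exists_congr fun c => inEigenbasis_eq_smul_one_iff hX c⟩

/-- for Hermitian `W`, Hermitian positive definite `X` with `tr X = 1`, and any
`s ∈ [0,1]`, one has `tr(X^{1-s} W X^s W) ≥ (tr(X W))²`, with equality iff `W ∝ I`. -/
theorem trace_jensen_ineq {M : ℕ} (X W : Matrix (Fin M) (Fin M) ℂ)
    (hX : X.IsHermitian) (hW : W.IsHermitian) (hXpd : X.PosDef) (htr : X.trace = 1)
    (s : ℝ) (hs : s ∈ Set.Icc (0 : ℝ) 1) :
    (Matrix.trace (hermPow hX (1 - s) * W * hermPow hX s * W)).re ≥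
        ((Matrix.trace (X * W)).re) ^ 2 ∧
      ((Matrix.trace (hermPow hX (1 - s) * W * hermPow hX s * W)).re =
          ((Matrix.trace (X * W)).re) ^ 2 ↔ ∃ c : ℂ, W = c • (1 : Matrix (Fin M) (Fin M) ℂ)) :=
  trace_jensen_ineq_general X W hX hW hXpd htr s
end

section
/- Let the gradient observations V̂(n) be uniformly bounded by V in norm, let τ > 0, and let γₙ satisfy 0 < γₙ < 1/τ for all n ≥ n₀. Then the iterates Y(n+1) = Y(n) - γₙ(V̂(n) + τ Y(n)) of discounted exponential learning are almost surely bounded: for all n, ‖Y(n)‖ ≤ max(‖Y(n₀)‖, V/τ). -/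
open Matrix

attribute [local instance] Matrix.frobeniusNormedAddCommGroup
attribute [local instance] Matrix.frobeniusNormedSpace

/-- boundedness of the iterates of discounted exponential learning:
if `‖V̂(n)‖ ≤ V`, `τ > 0` and `0 < γₙ < 1/τ` for `n ≥ n₀`, then the iterates of
`Y(n+1) = Y(n) - γₙ(V̂(n) + τ Y(n))` satisfy `‖Y(n)‖ ≤ max ‖Y(n₀)‖ (V/τ)` for all `n ≥ n₀`. -/
theorem dxl_iterates_bounded {M : ℕ} (Y Vhat : ℕ → Matrix (Fin M) (Fin M) ℂ)
    (hY : ∀ n, (Y n).IsHermitian) (hVh : ∀ n, (Vhat n).IsHermitian)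
    (V τ : ℝ) (hτ : 0 < τ) (hVbound : ∀ n, ‖Vhat n‖ ≤ V)
    (γ : ℕ → ℝ) (n₀ : ℕ) (hγ : ∀ n, n₀ ≤ n → 0 < γ n ∧ γ n < 1 / τ)
    (hrec : ∀ n, Y (n + 1) = Y n - (γ n : ℂ) • (Vhat n + (τ : ℂ) • Y n)) :
    ∀ n, n₀ ≤ n → ‖Y n‖ ≤ max ‖Y n₀‖ (V / τ) := by
  intro n hn
  induction n with
  | zero =>
      have h0 : n₀ = 0 := Nat.le_zero.mp hn
      rw [← h0]
      exact le_max_left _ _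
  | succ m ih =>
      rcases Nat.lt_or_ge n₀ (m+1) with h | h
      · have hm : n₀ ≤ m := Nat.lt_succ_iff.mp h
        have hih := ih hm
        obtain ⟨hγ0, hγ1⟩ := hγ m hm
        have hγτ : γ m * τ < 1 := by
          rw [lt_div_iff₀ hτ] at hγ1; linarith
        have hrw : Y (m+1) = ((1 - γ m * τ : ℝ) : ℂ) • Y m - (γ m : ℂ) • Vhat m := by
          rw [hrec m]
          push_cast
          ext i j
          simp [Matrix.sub_apply, Matrix.smul_apply, Matrix.add_apply]
          ring
        have h1 : ‖Y (m+1)‖ ≤ (1 - γ m * τ) * ‖Y m‖ + γ m * ‖Vhat m‖ := by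
          rw [hrw]
          calc ‖((1 - γ m * τ : ℝ) : ℂ) • Y m - (γ m : ℂ) • Vhat m‖
              ≤ ‖((1 - γ m * τ : ℝ) : ℂ) • Y m‖ + ‖(γ m : ℂ) • Vhat m‖ := norm_sub_le _ _
            _ = (1 - γ m * τ) * ‖Y m‖ + γ m * ‖Vhat m‖ := by
                rw [norm_smul, norm_smul, Complex.norm_real, Complex.norm_real,
                  Real.norm_eq_abs, Real.norm_eq_abs, abs_of_nonneg (le_of_lt hγ0),
                  abs_of_nonneg (by linarith : (0:ℝ) ≤ 1 - γ m * τ)]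
        have hVB : V ≤ τ * (max ‖Y n₀‖ (V / τ)) := by
          rw [mul_comm, ← div_le_iff₀ hτ]
          exact le_max_right _ _
        have hYB : ‖Y m‖ ≤ max ‖Y n₀‖ (V / τ) := hih
        have hVm : ‖Vhat m‖ ≤ V := hVbound m
        nlinarith [mul_le_mul_of_nonneg_left hYB (by linarith : (0:ℝ) ≤ 1 - γ m * τ),
          mul_le_mul_of_nonneg_left hVm (le_of_lt hγ0),
          mul_le_mul_of_nonneg_left hVB (le_of_lt hγ0)]
      · have : n₀ = m + 1 := le_antisymm hn h
        rw [← this]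
        exact le_max_left _ _
end

section
/- The von Neumann entropy function h(X) = tr(X log X) is strictly convex on the spectrahedron 𝒳 = {X Hermitian M×M : X ⪰ 0, tr(X) = 1} (interpreting x log x = 0 at x = 0). -/
open Matrix
open scoped ComplexOrder

/-- The von Neumann entropy functional `h(X) = tr(X log X) = Σᵢ λᵢ log λᵢ` (with `0 log 0 = 0`),
defined through the eigenvalues of `X` when `X` is Hermitian, and `0` otherwise. -/
noncomputable def vonNeumannEntropy {M : ℕ} (X : Matrix (Fin M) (Fin M) ℂ) : ℝ :=
  if hX : X.IsHermitian then ∑ i, hX.eigenvalues i * Real.log (hX.eigenvalues i) else 0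

/-!
Let `C = t • A + s • B` and let `U` diagonalise `C`. Writing `a`, `b` for the (real) diagonals of
`U⋆AU` and `U⋆BU` and `φ x = x log x`, the diagonal of `U⋆CU` is `t a + s b`, so
`h(C) = Σ φ(t aⱼ + s bⱼ) ≤ t Σ φ(aⱼ) + s Σ φ(bⱼ)`, strictly unless `a = b`.
Peierls' inequality gives `Σ φ(aⱼ) ≤ h(A)`: the diagonal of `U⋆AU` is the image of the spectrum
of `A` under the doubly stochastic matrix `(|Tₖⱼ|²)` of a unitary `T`, so Jensen's inequality
applies row by row; since `φ` is strictly convex, equality forces `U⋆AU` to be diagonal.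
So if `a = b` and both Peierls inequalities are equalities, `U⋆AU = U⋆BU` and hence `A = B`.
-/

open Finset

section Convex

variable {n : Type*} [Fintype n] {s : Set ℝ} {f : ℝ → ℝ}

theorem StrictConvexOn.sum_apply (hf : StrictConvexOn ℝ s f) :
    StrictConvexOn ℝ (Set.univ.pi fun _ : n => s) fun x => ∑ i, f (x i) := by
  refine ⟨convex_pi fun _ _ => hf.1, fun x hx y hy hxy a b ha hb hab => ?_⟩
  obtain ⟨i, hi⟩ := Function.ne_iff.1 hxy
  simp only [Set.mem_univ_pi] at hx hy
  simp only [Pi.add_apply, Pi.smul_apply, smul_eq_mul, mul_sum, ← sum_add_distrib]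
  refine sum_lt_sum (fun k _ => hf.convexOn.2 (hx k) (hy k) ha.le hb.le hab) ⟨i, mem_univ i, ?_⟩
  exact hf.2 (hx i) (hy i) hi ha hb hab

variable [DecidableEq n] {W : Matrix n n ℝ} {p : n → ℝ}

theorem ConvexOn.map_mulVec_le (hf : ConvexOn ℝ s f) (hW : W ∈ doublyStochastic ℝ n)
    (hp : ∀ k, p k ∈ s) (j : n) : f ((W *ᵥ p) j) ≤ (W *ᵥ (f ∘ p)) j := by
  simpa [mulVec, dotProduct] using hf.map_sum_le (t := univ) (w := W j) (p := p)
    (fun k _ => nonneg_of_mem_doublyStochastic hW) (sum_row_of_mem_doublyStochastic hW j)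
    (fun k _ => hp k)

theorem ConvexOn.sum_map_mulVec_le (hf : ConvexOn ℝ s f) (hW : W ∈ doublyStochastic ℝ n)
    (hp : ∀ k, p k ∈ s) : ∑ j, f ((W *ᵥ p) j) ≤ ∑ k, f (p k) :=
  calc ∑ j, f ((W *ᵥ p) j) ≤ ∑ j, (W *ᵥ (f ∘ p)) j :=
        sum_le_sum fun j _ => hf.map_mulVec_le hW hp j
    _ = ∑ k, f (p k) := sum_mulVec_of_mem_doublyStochastic hW

theorem StrictConvexOn.eq_mulVec_of_sum_map_mulVec_eq (hf : StrictConvexOn ℝ s f)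
    (hW : W ∈ doublyStochastic ℝ n) (hp : ∀ k, p k ∈ s)
    (heq : ∑ j, f ((W *ᵥ p) j) = ∑ k, f (p k)) {j k : n} (hjk : W j k ≠ 0) :
    p k = (W *ᵥ p) j := by
  have hrow : f ((W *ᵥ p) j) = (W *ᵥ (f ∘ p)) j := by
    refine (sum_eq_sum_iff_of_le fun j _ => hf.convexOn.map_mulVec_le hW hp j).1 ?_ j
      (mem_univ j)
    rw [heq, sum_mulVec_of_mem_doublyStochastic hW]
    rfl
  have hpk := (hf.map_sum_eq_iff' (t := univ) (w := W j) (p := p)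
    (fun k _ => nonneg_of_mem_doublyStochastic hW) (sum_row_of_mem_doublyStochastic hW j)
    (fun k _ => hp k)).1 (by simpa [mulVec, dotProduct] using hrow) k (mem_univ k) hjk
  simpa [mulVec, dotProduct] using hpk

end Convex

namespace Matrix

variable {𝕜 n : Type*} [RCLike 𝕜]

theorem convex_setOf_posSemidef : Convex ℝ {X : Matrix n n 𝕜 | X.PosSemidef} :=
  fun _ hX _ hY _ _ ha hb _ => (hX.smul ha).add (hY.smul hb)

theorem IsHermitian.eq_of_isDiag_of_re_diag_eq [DecidableEq n] {A B : Matrix n n 𝕜}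
    (hA : A.IsHermitian) (hB : B.IsHermitian) (hDA : A.IsDiag) (hDB : B.IsDiag)
    (h : ∀ i, RCLike.re (A i i) = RCLike.re (B i i)) : A = B := by
  rw [← hDA.diagonal_diag, ← hDB.diagonal_diag, ← hA.coe_re_diag, ← hB.coe_re_diag]
  simp only [diag_apply, h]

variable [Fintype n]

theorem convex_setOf_trace_eq (c : 𝕜) : Convex ℝ {X : Matrix n n 𝕜 | X.trace = c} :=
  (convex_singleton c).linear_preimage (traceLinearMap n ℝ 𝕜)

variable [DecidableEq n] {A U : Matrix n n 𝕜}

theorem map_norm_sq_mem_doublyStochastic (hU : U ∈ unitaryGroup n 𝕜) :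
    U.map (‖·‖ ^ 2) ∈ doublyStochastic ℝ n := by
  refine mem_doublyStochastic_iff_sum.2 ⟨fun _ _ => sq_nonneg _, fun i => ?_, fun j => ?_⟩
  · have hii := congr_fun₂ (mem_unitaryGroup_iff.1 hU) i i
    simp only [mul_apply, star_apply, one_apply_eq, RCLike.star_def, RCLike.mul_conj] at hii
    exact_mod_cast hii
  · have hjj := congr_fun₂ (mem_unitaryGroup_iff'.1 hU) j j
    simp only [mul_apply, star_apply, one_apply_eq, RCLike.star_def, RCLike.conj_mul] at hjj
    exact_mod_cast hjj

theorem star_mul_diagonal_mul_apply_self (U : Matrix n n 𝕜) (α : n → ℝ) (j : n) :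
    (star U * diagonal (RCLike.ofReal ∘ α) * U : Matrix n n 𝕜) j j =
      (((U.map (‖·‖ ^ 2))ᵀ *ᵥ α) j : ℝ) := by
  rw [mul_apply]
  simp only [mul_diagonal, star_apply, mulVec, dotProduct, transpose_apply, map_apply,
    Function.comp_apply, RCLike.star_def]
  push_cast
  refine sum_congr rfl fun k _ => ?_
  rw [← RCLike.conj_mul]
  ring

theorem star_mul_diagonal_mul_eq_diagonal (hU : U ∈ unitaryGroup n 𝕜) {α β : n → 𝕜}
    (h : ∀ k j, U k j ≠ 0 → α k = β j) : star U * diagonal α * U = diagonal β := by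
  have hcomm : diagonal α * U = U * diagonal β := by
    ext k j
    rw [diagonal_mul, mul_diagonal]
    by_cases hkj : U k j = 0
    · simp [hkj]
    · rw [h k j hkj, mul_comm]
  rw [Matrix.mul_assoc, hcomm, ← Matrix.mul_assoc, mem_unitaryGroup_iff'.1 hU, Matrix.one_mul]

theorem star_mul_mul_injective (hU : U ∈ unitaryGroup n 𝕜) :
    Function.Injective fun X => star U * X * U := fun X Y h => by
  simpa [← Matrix.mul_assoc, mem_unitaryGroup_iff.1 hU, Matrix.mul_assoc _ _ (star U)]
    using congrArg (fun Z => U * Z * star U) h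

namespace IsHermitian

variable {s : Set ℝ} {f : ℝ → ℝ}

theorem exists_conj_eq_star_mul_diagonal_mul (hA : A.IsHermitian) (hU : U ∈ unitaryGroup n 𝕜) :
    ∃ T ∈ unitaryGroup n 𝕜,
      star U * A * U = star T * diagonal (RCLike.ofReal ∘ hA.eigenvalues) * T := by
  refine ⟨star (hA.eigenvectorUnitary : Matrix n n 𝕜) * U,
    mul_mem (Unitary.star_mem hA.eigenvectorUnitary.2) hU, ?_⟩
  conv_lhs => rw [hA.spectral_theorem]
  simp [Unitary.conjStarAlgAut_apply, Matrix.mul_assoc]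

theorem sum_map_re_diag_conj_le (hA : A.IsHermitian) (hf : ConvexOn ℝ s f)
    (hs : ∀ i, hA.eigenvalues i ∈ s) (hU : U ∈ unitaryGroup n 𝕜) :
    ∑ j, f (RCLike.re ((star U * A * U) j j)) ≤ ∑ i, f (hA.eigenvalues i) := by
  obtain ⟨T, hT, hAT⟩ := hA.exists_conj_eq_star_mul_diagonal_mul hU
  simp only [hAT, star_mul_diagonal_mul_apply_self, RCLike.ofReal_re]
  exact hf.sum_map_mulVec_le
    (transpose_mem_doublyStochastic_iff.2 (map_norm_sq_mem_doublyStochastic hT)) hs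

theorem isDiag_conj_of_sum_map_re_diag_eq (hA : A.IsHermitian) (hf : StrictConvexOn ℝ s f)
    (hs : ∀ i, hA.eigenvalues i ∈ s) (hU : U ∈ unitaryGroup n 𝕜)
    (heq : ∑ j, f (RCLike.re ((star U * A * U) j j)) = ∑ i, f (hA.eigenvalues i)) :
    (star U * A * U).IsDiag := by
  obtain ⟨T, hT, hAT⟩ := hA.exists_conj_eq_star_mul_diagonal_mul hU
  have hW := transpose_mem_doublyStochastic_iff.2 (map_norm_sq_mem_doublyStochastic hT)
  simp only [hAT, star_mul_diagonal_mul_apply_self, RCLike.ofReal_re] at heq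
  rw [hAT, star_mul_diagonal_mul_eq_diagonal hT
    (β := RCLike.ofReal ∘ ((T.map (‖·‖ ^ 2))ᵀ *ᵥ hA.eigenvalues))]
  · exact isDiag_diagonal _
  intro k j hkj
  simp only [Function.comp_apply, RCLike.ofReal_inj]
  exact hf.eq_mulVec_of_sum_map_mulVec_eq hW hs heq (by simpa using hkj)

end IsHermitian

end Matrix

section Entropy

variable {M : ℕ} {X U : Matrix (Fin M) (Fin M) ℂ}

theorem vonNeumannEntropy_of_isHermitian (hX : X.IsHermitian) :
    vonNeumannEntropy X = ∑ i, hX.eigenvalues i * Real.log (hX.eigenvalues i) :=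
  dif_pos hX

theorem vonNeumannEntropy_eq_sum_mul_log_diag_conj_eigenvectorUnitary (hX : X.IsHermitian) :
    letI V : Matrix (Fin M) (Fin M) ℂ := hX.eigenvectorUnitary
    vonNeumannEntropy X =
      ∑ j, ((star V * X * V) j j).re * Real.log ((star V * X * V) j j).re := by
  rw [← Unitary.conjStarAlgAut_star_apply (S := ℂ), hX.conjStarAlgAut_star_eigenvectorUnitary,
    vonNeumannEntropy_of_isHermitian hX]
  simp

theorem Matrix.PosSemidef.sum_mul_log_diag_conj_le_vonNeumannEntropy (hX : X.PosSemidef)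
    (hU : U ∈ unitaryGroup (Fin M) ℂ) :
    ∑ j, ((star U * X * U) j j).re * Real.log ((star U * X * U) j j).re ≤
      vonNeumannEntropy X := by
  rw [vonNeumannEntropy_of_isHermitian hX.1]
  exact hX.1.sum_map_re_diag_conj_le Real.convexOn_mul_log hX.eigenvalues_nonneg hU

theorem Matrix.PosSemidef.isDiag_conj_of_vonNeumannEntropy_le (hX : X.PosSemidef)
    (hU : U ∈ unitaryGroup (Fin M) ℂ)
    (hle : vonNeumannEntropy X ≤
      ∑ j, ((star U * X * U) j j).re * Real.log ((star U * X * U) j j).re) :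
    (star U * X * U).IsDiag := by
  refine hX.1.isDiag_conj_of_sum_map_re_diag_eq Real.strictConvexOn_mul_log
    hX.eigenvalues_nonneg hU ?_
  rw [← vonNeumannEntropy_of_isHermitian]
  exact (hX.sum_mul_log_diag_conj_le_vonNeumannEntropy hU).antisymm hle

theorem strictConvexOn_vonNeumannEntropy :
    StrictConvexOn ℝ {X : Matrix (Fin M) (Fin M) ℂ | X.PosSemidef} vonNeumannEntropy := by
  refine ⟨convex_setOf_posSemidef, fun A hA B hB hAB t s ht hs hts => ?_⟩
  have hC : (t • A + s • B).PosSemidef := (hA.smul ht.le).add (hB.smul hs.le)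
  set U : Matrix (Fin M) (Fin M) ℂ := ↑hC.1.eigenvectorUnitary
  have hU : U ∈ unitaryGroup (Fin M) ℂ := hC.1.eigenvectorUnitary.2
  set a : Fin M → ℝ := fun j => ((star U * A * U) j j).re
  set b : Fin M → ℝ := fun j => ((star U * B * U) j j).re
  set F : (Fin M → ℝ) → ℝ := fun x => ∑ j, x j * Real.log (x j)
  have hFC : vonNeumannEntropy (t • A + s • B) = F (t • a + s • b) := by
    rw [vonNeumannEntropy_eq_sum_mul_log_diag_conj_eigenvectorUnitary hC.1]
    simp [F, a, b, U, Matrix.mul_add, Matrix.add_mul]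
  have hFA : F a ≤ vonNeumannEntropy A := hA.sum_mul_log_diag_conj_le_vonNeumannEntropy hU
  have hFB : F b ≤ vonNeumannEntropy B := hB.sum_mul_log_diag_conj_le_vonNeumannEntropy hU
  have hF := Real.strictConvexOn_mul_log.sum_apply (n := Fin M)
  have ha : a ∈ Set.univ.pi fun _ => Set.Ici 0 := fun j _ =>
    (Complex.le_def.1 ((hA.conjTranspose_mul_mul_same U).diag_nonneg (i := j))).1
  have hb : b ∈ Set.univ.pi fun _ => Set.Ici 0 := fun j _ =>
    (Complex.le_def.1 ((hB.conjTranspose_mul_mul_same U).diag_nonneg (i := j))).1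
  have hstrict : F (t • a + s • b) < t * F a + s * F b ∨ F a < vonNeumannEntropy A ∨
      F b < vonNeumannEntropy B := by
    by_cases hab : a = b
    · right
      by_contra! hge
      exact hAB <| star_mul_mul_injective hU <|
        (hA.conjTranspose_mul_mul_same U).1.eq_of_isDiag_of_re_diag_eq
          (hB.conjTranspose_mul_mul_same U).1 (hA.isDiag_conj_of_vonNeumannEntropy_le hU hge.1)
          (hB.isDiag_conj_of_vonNeumannEntropy_le hU hge.2) (congrFun hab)
    · exact Or.inl (hF.2 ha hb hab ht hs hts)
  have hle : F (t • a + s • b) ≤ t * F a + s * F b := hF.convexOn.2 ha hb ht.le hs.le hts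
  rw [hFC, smul_eq_mul, smul_eq_mul]
  rcases hstrict with h | h | h <;> nlinarith

end Entropy

/-- `h(X) = tr(X log X)` is strictly convex on the spectrahedron
`{X ⪰ 0 : tr X = 1}`. -/
theorem vonNeumannEntropy_strictConvexOn {M : ℕ} :
    StrictConvexOn ℝ
      {X : Matrix (Fin M) (Fin M) ℂ | X.PosSemidef ∧ X.trace = 1}
      (vonNeumannEntropy (M := M)) :=
  strictConvexOn_vonNeumannEntropy.subset (fun _ hX => hX.1)
    (convex_setOf_posSemidef.inter (convex_setOf_trace_eq 1))
end

section
/- For a positive definite Hermitian matrix X with tr(X) = 1 and Hermitian V, if V + τ(log X + I) = -κ I for some real κ and τ > 0, then X = exp(-V/τ) / tr[exp(-V/τ)] up to the constraint normalization; conversely, X* = exp(Y*)/tr[exp(Y*)] with τY* = -V* satisfies V* + τ log X* = -τ log tr[exp(-V*/τ)] · I. -/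
/-!
`hermLog` is the real logarithm `CFC.log` of the continuous functional calculus, so both parts
reduce to two spectral identities: `exp (log X + c) = e^c X` for positive definite `X`, and
`log (t • exp Y) = log t + Y` for Hermitian `Y` and `t > 0`. In the first part the fixed-point
equation says `-V/τ = log X + (κ/τ + 1)`, so `exp (-V/τ)` is a nonzero multiple of `X` and
`tr X = 1` identifies the multiple with `tr exp (-V/τ)`. In the second part `tr exp Y*` is
positive, being the trace of a positive definite matrix, and
`log X* = Y* - log (tr exp Y*)`; multiplying by `τ` gives the claim.
-/
open Matrix
open scoped ComplexOrder

/-- The matrix logarithm of a Hermitian (positive definite) matrix, defined via the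
spectral decomposition: `log X = U diag(log λᵢ) U†`. -/
noncomputable def hermLog {M : ℕ} {X : Matrix (Fin M) (Fin M) ℂ} (hX : X.IsHermitian) :
    Matrix (Fin M) (Fin M) ℂ :=
  (hX.eigenvectorUnitary : Matrix (Fin M) (Fin M) ℂ) *
    Matrix.diagonal (fun i => ((Real.log (hX.eigenvalues i) : ℝ) : ℂ)) *
      (star (hX.eigenvectorUnitary : Matrix (Fin M) (Fin M) ℂ))

open scoped Matrix.Norms.L2Operator MatrixOrder
open NormedSpace

theorem hermLog_eq_log {M : ℕ} {X : Matrix (Fin M) (Fin M) ℂ} (hX : X.IsHermitian) :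
    hermLog hX = CFC.log X := by
  rw [CFC.log, hX.cfc_eq]
  rfl

namespace Matrix

variable {n : Type*} [Fintype n] [DecidableEq n]

theorem posDef_exp {A : Matrix n n ℂ} (hA : A.IsHermitian) : (exp A).PosDef :=
  isStrictlyPositive_iff_posDef.mp <|
    (isUnit_exp A).isStrictlyPositive hA.isSelfAdjoint.exp_nonneg

theorem exp_add_algebraMap (A : Matrix n n ℂ) (c : ℂ) :
    exp (A + algebraMap ℂ _ c) = Complex.exp c • exp A := by
  rw [exp_add_of_commute _ _ (Algebra.commutes c A).symm, ← algebraMap_exp_comm,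
    ← Complex.exp_eq_exp_ℂ, ← Algebra.commutes, Algebra.smul_def]

theorem log_inv_trace_smul_exp {A : Matrix n n ℂ} (hA : A.IsHermitian) :
    CFC.log ((exp A).trace⁻¹ • exp A) = A - algebraMap ℝ _ (Real.log (exp A).trace.re) := by
  cases isEmpty_or_nonempty n
  · exact Subsingleton.elim _ _
  obtain ⟨hre, him⟩ := Complex.pos_iff.mp (posDef_exp hA).trace_pos
  have htrace : (exp A).trace = ((exp A).trace.re : ℂ) := Complex.ext rfl him.symm
  rw [htrace, Complex.ofReal_re, ← Complex.ofReal_inv, Complex.coe_smul,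
    CFC.log_smul' _ (inv_pos.mpr hre) (posDef_exp hA).isStrictlyPositive,
    CFC.log_exp A hA.isSelfAdjoint, Real.log_inv, map_neg, neg_add_eq_sub]

end Matrix

/-- fixed points of discounted exponential learning.
(a) If `X` is Hermitian positive definite with unit trace and
`V + τ(log X + I) = -κ I`, then `X = exp(-V/τ)/tr[exp(-V/τ)]`.
(b) Conversely, `X* = exp(Y*)/tr[exp(Y*)]` with `τ Y* = -V*` satisfies
`V* + τ log X* = -τ log tr[exp(-V*/τ)] · I`. -/
theorem dxl_fixed_point_characterization {M : ℕ} (τ : ℝ) (hτ : 0 < τ) :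
    (∀ (X V : Matrix (Fin M) (Fin M) ℂ) (hX : X.IsHermitian) (_ : V.IsHermitian)
        (_ : X.PosDef) (_ : X.trace = 1) (κ : ℝ),
      V + (τ : ℂ) • (hermLog hX + 1) = -(κ : ℂ) • 1 →
        X = (Matrix.trace (NormedSpace.exp ((-(τ : ℂ))⁻¹ • V)))⁻¹ •
              NormedSpace.exp ((-(τ : ℂ))⁻¹ • V)) ∧
    (∀ (Vs Ys Xs : Matrix (Fin M) (Fin M) ℂ) (_ : Vs.IsHermitian)
        (hXs : Xs.IsHermitian),
      (τ : ℂ) • Ys = -Vs →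
      Xs = (Matrix.trace (NormedSpace.exp Ys))⁻¹ • NormedSpace.exp Ys →
        Vs + (τ : ℂ) • hermLog hXs =
          (-(τ * Real.log ((Matrix.trace (NormedSpace.exp ((-(τ : ℂ))⁻¹ • Vs))).re) : ℝ) : ℂ)
            • 1) := by
  have hτ0 : (τ : ℂ) ≠ 0 := by exact_mod_cast hτ.ne'
  constructor
  · intro X V hX _ hXpos htr κ hfix
    have hV : (-(τ : ℂ))⁻¹ • V = CFC.log X + algebraMap ℂ _ (κ / τ + 1) := by
      rw [← hermLog_eq_log hX, eq_sub_of_add_eq hfix, Algebra.algebraMap_eq_smul_one]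
      match_scalars
      · field_simp
        ring
      · field_simp
    rw [hV, exp_add_algebraMap, CFC.exp_log X hXpos.isStrictlyPositive, trace_smul, htr,
      smul_eq_mul, mul_one, smul_smul, inv_mul_cancel₀ (Complex.exp_ne_zero _), one_smul]
  · rintro Vs Ys Xs hVs hXs hτY rfl
    have hY : (-(τ : ℂ))⁻¹ • Vs = Ys := by
      rw [neg_eq_iff_eq_neg.mp hτY.symm, inv_neg, neg_smul, smul_neg, neg_neg,
        inv_smul_smul₀ hτ0]
    have hYherm : Ys.IsHermitian := hY ▸ hVs.smul (by simp [isSelfAdjoint_iff])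
    rw [hY, hermLog_eq_log, log_inv_trace_smul_exp hYherm, smul_sub, hτY,
      Algebra.algebraMap_eq_smul_one, ← Complex.coe_smul]
    push_cast
    module
end

section
/- Along any interior solution X(t) of the primal dynamics Ẋ = -∫₀¹ X^{1-s} V_τ(X) X^s ds + tr[X V_τ(X)] X with V_τ(X) = ∇F(X) + τ log X, the perturbed objective F_τ(X) = F(X) + τ tr(X log X) satisfies d/dt F_τ(X(t)) ≤ 0, with equality if and only if V_τ(X(t)) is proportional to the identity. -/
open Matrix
open scoped ComplexOrder

attribute [local instance] Matrix.frobeniusNormedAddCommGroup Matrix.frobeniusNormedSpace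

/-!
Write `V = ∇F(X) + τ log X`, `T = tr(X V)` and `Φ(A) = ∫₀¹ X^{1-s} A X^s ds` (the Kubo–Mori
operator of `X`), so that `Ẋ = -Φ(V) + T X`. Since `Φ(1) = X`, `tr Φ(A) = tr(X A)` and `tr X = 1`,
expanding gives `tr(Ẋ V) = -tr(Φ(V₀) V₀)` with `V₀ = V - T • 1`. In an eigenbasis of `X`,
`tr(Φ(A) Aᴴ) = ∑_{k,j} L(λ_k, λ_j) |A_kj|²` where `L(a, b) = ∫₀¹ a^{1-s} b^s ds > 0` is the
logarithmic mean of the eigenvalues, so `Φ` is positive definite for the Hilbert–Schmidt inner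
product. Hence `tr(Ẋ V) ≤ 0`, with equality iff `V₀ = 0`, i.e. iff `V` is a multiple of `1`.
-/

namespace Matrix

variable {n : Type*} [Fintype n]

theorem trace_diagonal_mul_mul_diagonal_mul_conjTranspose [DecidableEq n] (a b : n → ℂ)
    (A : Matrix n n ℂ) :
    trace (diagonal a * A * diagonal b * Aᴴ) = ∑ k, ∑ j, a k * b j * Complex.normSq (A k j) := by
  refine Finset.sum_congr rfl fun k _ => Finset.sum_congr rfl fun j _ => ?_
  simp only [mul_diagonal, diagonal_mul, conjTranspose_apply, Complex.star_def,
    ← Complex.mul_conj]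
  ring

theorem trace_intervalIntegral_mul {F : ℝ → Matrix n n ℂ} (hF : Continuous F) (a b : ℝ)
    (B : Matrix n n ℂ) :
    trace ((∫ s in a..b, F s) * B) = ∫ s in a..b, trace (F s * B) :=
  (LinearMap.toContinuousLinearMap ((traceLinearMap n ℂ ℂ).comp (LinearMap.mulRight ℂ B))
    |>.intervalIntegral_comp_comm (hF.intervalIntegrable a b)).symm

theorem IsHermitian.isSelfAdjoint_trace_mul {α : Type*} [CommRing α] [StarRing α]
    {A B : Matrix n n α} (hA : A.IsHermitian) (hB : B.IsHermitian) :
    IsSelfAdjoint (trace (A * B)) := by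
  rw [IsSelfAdjoint, ← trace_conjTranspose, conjTranspose_mul, hA.eq, hB.eq, trace_mul_comm]

end Matrix

noncomputable def logMean (a b : ℝ) : ℝ := ∫ s in (0 : ℝ)..1, a ^ (1 - s) * b ^ s

theorem logMean_pos {a b : ℝ} (ha : 0 < a) (hb : 0 < b) : 0 < logMean a b :=
  have hcont : Continuous fun s : ℝ => a ^ (1 - s) * b ^ s :=
    ((Real.continuous_const_rpow ha.ne').comp (continuous_const.sub continuous_id)).mul
      (Real.continuous_const_rpow hb.ne')
  intervalIntegral.intervalIntegral_pos_of_pos_on (hcont.intervalIntegrable 0 1)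
    (fun _ _ => mul_pos (Real.rpow_pos_of_pos ha _) (Real.rpow_pos_of_pos hb _)) one_pos

theorem integral_sum_sum_rpow_mul_rpow_mul {ι : Type*} [Fintype ι] {a : ι → ℝ}
    (ha : ∀ i, 0 < a i) (q : ι → ι → ℝ) :
    ∫ s in (0 : ℝ)..1, ∑ k, ∑ j, a k ^ (1 - s) * a j ^ s * q k j =
      ∑ k, ∑ j, logMean (a k) (a j) * q k j := by
  have hcont : ∀ k j, Continuous fun s : ℝ => a k ^ (1 - s) * a j ^ s * q k j := fun k j =>
    ((continuous_const.rpow (continuous_const.sub continuous_id) fun _ => .inl (ha k).ne').mul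
      (Real.continuous_const_rpow (ha j).ne')).mul continuous_const
  rw [intervalIntegral.integral_finsetSum fun k _ =>
    (continuous_finsetSum Finset.univ fun j _ => hcont k j).intervalIntegrable 0 1]
  simp only [intervalIntegral.integral_finsetSum fun j _ => (hcont _ j).intervalIntegrable 0 1,
    intervalIntegral.integral_mul_const, logMean]

section KuboMori

variable {M : ℕ} {X : Matrix (Fin M) (Fin M) ℂ}

theorem hermLog_isHermitian (hX : X.IsHermitian) : (hermLog hX).IsHermitian := by
  rw [hermLog, star_eq_conjTranspose]
  exact isHermitian_mul_mul_conjTranspose _ (isHermitian_diagonal_of_self_adjoint _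
    (funext fun i => Complex.conj_ofReal _))

theorem hermPow_one (hX : X.IsHermitian) : hermPow hX 1 = X := by
  simp only [hermPow, Real.rpow_one]
  exact hX.spectral_theorem.symm

theorem hermPow_mul_hermPow {hX : X.IsHermitian} (hXpd : X.PosDef) (a b : ℝ) :
    hermPow hX a * hermPow hX b = hermPow hX (a + b) := by
  have hU := Unitary.star_mul_self_of_mem hX.eigenvectorUnitary.2
  simp only [hermPow, mul_assoc]
  rw [← mul_assoc (star _) _, hU, one_mul, ← mul_assoc (diagonal _), diagonal_mul_diagonal]
  congr 3
  ext i
  rw [Real.rpow_add (hXpd.eigenvalues_pos i), Complex.ofReal_mul]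

theorem continuous_hermPow {hX : X.IsHermitian} (hXpd : X.PosDef) : Continuous (hermPow hX) :=
  (continuous_const.matrix_mul (continuous_pi fun i => Complex.continuous_ofReal.comp
    (Real.continuous_const_rpow (hXpd.eigenvalues_pos i).ne')).matrix_diagonal).matrix_mul
    continuous_const

theorem trace_hermPow_mul_hermPow_mul_conjTranspose (hX : X.IsHermitian) (t s : ℝ)
    (A : Matrix (Fin M) (Fin M) ℂ) :
    trace (hermPow hX t * A * hermPow hX s * Aᴴ) =
      ((∑ k, ∑ j, hX.eigenvalues k ^ t * hX.eigenvalues j ^ s *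
        Complex.normSq ((star (hX.eigenvectorUnitary : Matrix (Fin M) (Fin M) ℂ) * A *
          hX.eigenvectorUnitary) k j) : ℝ) : ℂ) := by
  set U := (hX.eigenvectorUnitary : Matrix (Fin M) (Fin M) ℂ)
  have hU : star U * U = 1 := Unitary.star_mul_self_of_mem hX.eigenvectorUnitary.2
  have hU' : U * Uᴴ = 1 := Unitary.mul_star_self_of_mem hX.eigenvectorUnitary.2
  have hconj : hermPow hX t * A * hermPow hX s * Aᴴ =
      U * (diagonal (fun i => ((hX.eigenvalues i ^ t : ℝ) : ℂ)) * (star U * A * U) *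
        diagonal (fun i => ((hX.eigenvalues i ^ s : ℝ) : ℂ)) * (star U * A * U)ᴴ) * star U := by
    simp only [hermPow, star_eq_conjTranspose, conjTranspose_mul, conjTranspose_conjTranspose,
      mul_assoc, hU', mul_one]
    rfl
  rw [hconj, trace_mul_cycle, hU, one_mul, trace_diagonal_mul_mul_diagonal_mul_conjTranspose]
  push_cast
  rfl

noncomputable def kuboMori (hX : X.IsHermitian) (A : Matrix (Fin M) (Fin M) ℂ) :
    Matrix (Fin M) (Fin M) ℂ :=
  ∫ s in (0 : ℝ)..1, hermPow hX (1 - s) * A * hermPow hX s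

theorem continuous_hermPow_mul_hermPow {hX : X.IsHermitian} (hXpd : X.PosDef)
    (A : Matrix (Fin M) (Fin M) ℂ) :
    Continuous fun s => hermPow hX (1 - s) * A * hermPow hX s :=
  (((continuous_hermPow hXpd).comp (continuous_const.sub continuous_id)).matrix_mul
    continuous_const).matrix_mul (continuous_hermPow hXpd)

theorem kuboMori_sub_smul_one {hX : X.IsHermitian} (hXpd : X.PosDef)
    (A : Matrix (Fin M) (Fin M) ℂ) (c : ℂ) :
    kuboMori hX (A - c • 1) = kuboMori hX A - c • X := by
  have hX1 : ∀ s : ℝ, hermPow hX (1 - s) * (1 : Matrix (Fin M) (Fin M) ℂ) * hermPow hX s = X :=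
    fun s => by rw [mul_one, hermPow_mul_hermPow hXpd, sub_add_cancel, hermPow_one]
  have hsplit : ∀ s : ℝ, hermPow hX (1 - s) * (A - c • 1) * hermPow hX s =
      hermPow hX (1 - s) * A * hermPow hX s - c • X := fun s => by
    rw [mul_sub, sub_mul, mul_smul_comm, smul_mul_assoc, hX1]
  simp only [kuboMori, hsplit]
  rw [intervalIntegral.integral_sub
      ((continuous_hermPow_mul_hermPow hXpd A).intervalIntegrable 0 1) intervalIntegrable_const,
    intervalIntegral.integral_const, sub_zero, one_smul]

theorem trace_kuboMori_mul {hX : X.IsHermitian} (hXpd : X.PosDef)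
    (A B : Matrix (Fin M) (Fin M) ℂ) :
    trace (kuboMori hX A * B) =
      ∫ s in (0 : ℝ)..1, trace (hermPow hX (1 - s) * A * hermPow hX s * B) :=
  trace_intervalIntegral_mul (continuous_hermPow_mul_hermPow hXpd A) 0 1 B

theorem trace_kuboMori {hX : X.IsHermitian} (hXpd : X.PosDef) (A : Matrix (Fin M) (Fin M) ℂ) :
    trace (kuboMori hX A) = trace (X * A) := by
  have h : ∀ s : ℝ, trace (hermPow hX (1 - s) * A * hermPow hX s * 1) = trace (X * A) :=
    fun s => by
      rw [mul_one, trace_mul_cycle, hermPow_mul_hermPow hXpd, add_sub_cancel, hermPow_one]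
  rw [← mul_one (kuboMori hX A), trace_kuboMori_mul hXpd,
    intervalIntegral.integral_congr fun s _ => h s, intervalIntegral.integral_const, sub_zero,
    one_smul]

theorem trace_kuboMori_mul_conjTranspose {hX : X.IsHermitian} (hXpd : X.PosDef)
    (A : Matrix (Fin M) (Fin M) ℂ) :
    trace (kuboMori hX A * Aᴴ) =
      ((∑ k, ∑ j, logMean (hX.eigenvalues k) (hX.eigenvalues j) *
        Complex.normSq ((star (hX.eigenvectorUnitary : Matrix (Fin M) (Fin M) ℂ) * A *
          hX.eigenvectorUnitary) k j) : ℝ) : ℂ) := by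
  simp only [trace_kuboMori_mul hXpd, trace_hermPow_mul_hermPow_mul_conjTranspose,
    intervalIntegral.integral_ofReal, integral_sum_sum_rpow_mul_rpow_mul hXpd.eigenvalues_pos]

theorem re_trace_kuboMori_mul_conjTranspose_nonneg {hX : X.IsHermitian} (hXpd : X.PosDef)
    (A : Matrix (Fin M) (Fin M) ℂ) :
    0 ≤ (trace (kuboMori hX A * Aᴴ)).re := by
  rw [trace_kuboMori_mul_conjTranspose hXpd, Complex.ofReal_re]
  exact Finset.sum_nonneg fun k _ => Finset.sum_nonneg fun j _ => mul_nonneg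
    (logMean_pos (hXpd.eigenvalues_pos k) (hXpd.eigenvalues_pos j)).le (Complex.normSq_nonneg _)

theorem re_trace_kuboMori_mul_conjTranspose_eq_zero_iff {hX : X.IsHermitian} (hXpd : X.PosDef)
    (A : Matrix (Fin M) (Fin M) ℂ) :
    (trace (kuboMori hX A * Aᴴ)).re = 0 ↔ A = 0 := by
  set U := (hX.eigenvectorUnitary : Matrix (Fin M) (Fin M) ℂ)
  have hU' : U * star U = 1 := Unitary.mul_star_self_of_mem hX.eigenvectorUnitary.2
  have hconj : star U * A * U = 0 ↔ A = 0 := by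
    refine ⟨fun h => ?_, fun h => by rw [h, mul_zero, zero_mul]⟩
    calc A = U * (star U * A * U) * star U := by
          simp only [mul_assoc, hU', mul_one]; rw [← mul_assoc, hU', one_mul]
      _ = 0 := by rw [h, mul_zero, zero_mul]
  have hpos : ∀ k j, 0 < logMean (hX.eigenvalues k) (hX.eigenvalues j) := fun k j =>
    logMean_pos (hXpd.eigenvalues_pos k) (hXpd.eigenvalues_pos j)
  rw [trace_kuboMori_mul_conjTranspose hXpd, Complex.ofReal_re, ← hconj]
  set B := star U * A * U
  have hnn : ∀ k j, 0 ≤ logMean (hX.eigenvalues k) (hX.eigenvalues j) * Complex.normSq (B k j) :=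
    fun k j => mul_nonneg (hpos k j).le (Complex.normSq_nonneg _)
  refine ⟨fun h => ?_, fun h => by simp [h]⟩
  ext k j
  have hk := (Finset.sum_eq_zero_iff_of_nonneg fun k _ => Finset.sum_nonneg fun j _ => hnn k j).1
    h k (Finset.mem_univ k)
  have hkj := (Finset.sum_eq_zero_iff_of_nonneg fun j _ => hnn k j).1 hk j (Finset.mem_univ j)
  exact Complex.normSq_eq_zero.1 ((mul_eq_zero.1 hkj).resolve_left (hpos k j).ne')

theorem trace_dynamics_mul_eq {hX : X.IsHermitian} (hXpd : X.PosDef) (htr : X.trace = 1)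
    (V : Matrix (Fin M) (Fin M) ℂ) :
    trace ((-kuboMori hX V + trace (X * V) • X) * V) =
      -trace (kuboMori hX (V - trace (X * V) • 1) * (V - trace (X * V) • 1)) := by
  rw [kuboMori_sub_smul_one hXpd]
  simp only [sub_mul, mul_sub, add_mul, neg_mul, smul_mul_assoc, mul_smul_comm, mul_one,
    trace_sub, trace_add, trace_neg, trace_smul, smul_eq_mul, trace_kuboMori hXpd, htr]
  ring

end KuboMori

theorem dxl_lyapunov_general {M : ℕ} (τ : ℝ)
    (gradF : Matrix (Fin M) (Fin M) ℂ → Matrix (Fin M) (Fin M) ℂ)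
    (X Xdot : Matrix (Fin M) (Fin M) ℂ)
    (hX : X.IsHermitian) (hXpd : X.PosDef) (htr : X.trace = 1)
    (hgradF : (gradF X).IsHermitian)
    (hdyn : Xdot =
      -(∫ s in (0 : ℝ)..1,
          hermPow hX (1 - s) * (gradF X + (τ : ℂ) • hermLog hX) * hermPow hX s) +
        Matrix.trace (X * (gradF X + (τ : ℂ) • hermLog hX)) • X) :
    (Matrix.trace (Xdot * (gradF X + (τ : ℂ) • hermLog hX))).re ≤ 0 ∧
      ((Matrix.trace (Xdot * (gradF X + (τ : ℂ) • hermLog hX))).re = 0 ↔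
        ∃ c : ℂ, gradF X + (τ : ℂ) • hermLog hX = c • 1) := by
  set V := gradF X + (τ : ℂ) • hermLog hX
  have hV : V.IsHermitian := hgradF.add ((hermLog_isHermitian hX).smul (Complex.conj_ofReal τ))
  set T := trace (X * V)
  have hV₀ : (V - T • 1).IsHermitian :=
    hV.sub (isHermitian_one.smul (hX.isSelfAdjoint_trace_mul hV))
  have hdissipation : trace (Xdot * V) = -trace (kuboMori hX (V - T • 1) * (V - T • 1)ᴴ) := by
    rw [hV₀.eq, hdyn]
    exact trace_dynamics_mul_eq hXpd htr V
  rw [hdissipation, Complex.neg_re, neg_nonpos, neg_eq_zero,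
    re_trace_kuboMori_mul_conjTranspose_eq_zero_iff hXpd, sub_eq_zero]
  refine ⟨re_trace_kuboMori_mul_conjTranspose_nonneg hXpd _, fun h => ⟨T, h⟩, ?_⟩
  rintro ⟨c, hc⟩
  have hT : trace (X * V) = c := by
    rw [hc, mul_smul_comm, mul_one, trace_smul, htr, smul_eq_mul, mul_one]
  rw [hc]
  exact congrArg (· • 1) hT.symm

/-- Lyapunov property. Along interior solutions of the primal dynamics, the
derivative `d/dt F_τ(X(t)) = tr[Ẋ V_τ(X)]` satisfies `tr[Ẋ V_τ(X)].re ≤ 0`, with equality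
iff `V_τ(X(t)) ∝ I`. Here `Ẋ` is given by the primal dynamics
`Ẋ = -∫₀¹ X^{1-s} V_τ(X) X^s ds + tr[X V_τ(X)] X` and `V_τ(X) = ∇F(X) + τ log X`. -/
theorem dxl_lyapunov {M : ℕ} (τ : ℝ) (hτ : 0 < τ)
    (gradF : Matrix (Fin M) (Fin M) ℂ → Matrix (Fin M) (Fin M) ℂ)
    (X Xdot : Matrix (Fin M) (Fin M) ℂ)
    (hX : X.IsHermitian) (hXpd : X.PosDef) (htr : X.trace = 1)
    (hgradF : (gradF X).IsHermitian)
    (hdyn : Xdot =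
      -(∫ s in (0 : ℝ)..1,
          hermPow hX (1 - s) * (gradF X + (τ : ℂ) • hermLog hX) * hermPow hX s) +
        Matrix.trace (X * (gradF X + (τ : ℂ) • hermLog hX)) • X) :
    (Matrix.trace (Xdot * (gradF X + (τ : ℂ) • hermLog hX))).re ≤ 0 ∧
      ((Matrix.trace (Xdot * (gradF X + (τ : ℂ) • hermLog hX))).re = 0 ↔
        ∃ c : ℂ, gradF X + (τ : ℂ) • hermLog hX = c • 1) :=
  dxl_lyapunov_general τ gradF X Xdot hX hXpd htr hgradF hdyn
end
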